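/- arXiv:1302.6633 — 2 statements merged into one kernel-verified Lean document; each statement's English description precedes it below -/
import Mathlib

section
/- Let u, b : ℝ² → ℝ² be smooth divergence-free vector fields. Define ω = ∇⊥·u, j = ∇⊥·b, where ∇⊥·F = -∂₂F₁ + ∂₁F₂. Then ∇⊥·(b·∇u - u·∇b) = b·∇ω - u·∇j + T(∇u, ∇b), where T(∇u,∇b) = 2∂₁b₁(∂₁u₂ + ∂₂u₁) + 2∂₂u₂(∂₁b₂ + ∂₂b₁). -/
/-- Partial derivative `∂ᵢ f` of a scalar function on `ℝ²`
(`i = 0` is `∂₁`, `i = 1` is `∂₂`). -/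
noncomputable def pd (i : Fin 2) (f : (Fin 2 → ℝ) → ℝ) (x : Fin 2 → ℝ) : ℝ :=
  fderiv ℝ f x (Pi.single i 1)

lemma contDiff_comp_proj {u : (Fin 2 → ℝ) → (Fin 2 → ℝ)} (hu : ContDiff ℝ (⊤ : ℕ∞) u) (i : Fin 2) :
    ContDiff ℝ (⊤ : ℕ∞) (fun y => u y i) :=
  (ContinuousLinearMap.proj (R := ℝ) (φ := fun _ : Fin 2 => ℝ) i).contDiff.comp hu

lemma pd_contDiff {f : (Fin 2 → ℝ) → ℝ} (hf : ContDiff ℝ (⊤ : ℕ∞) f) (i : Fin 2) :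
    ContDiff ℝ (⊤ : ℕ∞) (pd i f) := by
  have h := hf.fderiv_right (m := (⊤ : ℕ∞)) (by simp)
  exact h.clm_apply contDiff_const

lemma pd_add {f g : (Fin 2 → ℝ) → ℝ} {x} (hf : DifferentiableAt ℝ f x)
    (hg : DifferentiableAt ℝ g x) (i : Fin 2) :
    pd i (fun y => f y + g y) x = pd i f x + pd i g x := by
  simp [pd, fderiv_fun_add hf hg]

lemma pd_sub {f g : (Fin 2 → ℝ) → ℝ} {x} (hf : DifferentiableAt ℝ f x)
    (hg : DifferentiableAt ℝ g x) (i : Fin 2) :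
    pd i (fun y => f y - g y) x = pd i f x - pd i g x := by
  simp [pd, fderiv_fun_sub hf hg]

lemma pd_neg {f : (Fin 2 → ℝ) → ℝ} {x} (i : Fin 2) :
    pd i (fun y => -(f y)) x = -(pd i f x) := by
  simp [pd, fderiv_neg]

lemma pd_mul {f g : (Fin 2 → ℝ) → ℝ} {x} (hf : DifferentiableAt ℝ f x)
    (hg : DifferentiableAt ℝ g x) (i : Fin 2) :
    pd i (fun y => f y * g y) x = f x * pd i g x + g x * pd i f x := by
  simp [pd, fderiv_fun_mul hf hg]

lemma pd_comm {f : (Fin 2 → ℝ) → ℝ} (hf : ContDiff ℝ (⊤ : ℕ∞) f) (i k : Fin 2) (x : Fin 2 → ℝ) :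
    pd i (pd k f) x = pd k (pd i f) x := by
  have hdf : Differentiable ℝ f := hf.differentiable (by simp)
  have hdf' : DifferentiableAt ℝ (fderiv ℝ f) x :=
    ((hf.fderiv_right (m := (⊤ : ℕ∞)) (by simp)).differentiable (by simp)) x
  have hsymm := second_derivative_symmetric (f' := fderiv ℝ f)
    (fun y => (hdf y).hasFDerivAt) hdf'.hasFDerivAt (Pi.single i 1) (Pi.single k 1)
  have key : ∀ (v w : Fin 2 → ℝ),
      fderiv ℝ (fun y => fderiv ℝ f y w) x v = fderiv ℝ (fderiv ℝ f) x v w := by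
    intro v w
    rw [fderiv_clm_apply hdf' (differentiableAt_const _)]
    simp
  unfold pd
  rw [key, key, hsymm]

lemma pd_half {f g : (Fin 2 → ℝ) → (Fin 2 → ℝ)}
    (hf : ContDiff ℝ (⊤ : ℕ∞) f) (hg : ContDiff ℝ (⊤ : ℕ∞) g) (l i : Fin 2) (x : Fin 2 → ℝ) :
    pd i (fun y => f y 0 * pd 0 (fun z => g z l) y + f y 1 * pd 1 (fun z => g z l) y) x
    = pd i (fun y => f y 0) x * pd 0 (fun z => g z l) x
      + f x 0 * pd i (pd 0 (fun z => g z l)) x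
      + pd i (fun y => f y 1) x * pd 1 (fun z => g z l) x
      + f x 1 * pd i (pd 1 (fun z => g z l)) x := by
  have hf0 : DifferentiableAt ℝ (fun y => f y 0) x :=
    ((contDiff_comp_proj hf 0).differentiable (by simp)) x
  have hf1 : DifferentiableAt ℝ (fun y => f y 1) x :=
    ((contDiff_comp_proj hf 1).differentiable (by simp)) x
  have hg0 : DifferentiableAt ℝ (pd 0 (fun z => g z l)) x :=
    ((pd_contDiff (contDiff_comp_proj hg l) 0).differentiable (by simp)) x
  have hg1 : DifferentiableAt ℝ (pd 1 (fun z => g z l)) x :=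
    ((pd_contDiff (contDiff_comp_proj hg l) 1).differentiable (by simp)) x
  rw [pd_add (hf0.fun_mul hg0) (hf1.fun_mul hg1), pd_mul hf0 hg0, pd_mul hf1 hg1]
  ring

lemma diffAt_half {f g : (Fin 2 → ℝ) → (Fin 2 → ℝ)}
    (hf : ContDiff ℝ (⊤ : ℕ∞) f) (hg : ContDiff ℝ (⊤ : ℕ∞) g) (l : Fin 2) (x : Fin 2 → ℝ) :
    DifferentiableAt ℝ
      (fun y => f y 0 * pd 0 (fun z => g z l) y + f y 1 * pd 1 (fun z => g z l) y) x := by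
  have hf0 : DifferentiableAt ℝ (fun y => f y 0) x :=
    ((contDiff_comp_proj hf 0).differentiable (by simp)) x
  have hf1 : DifferentiableAt ℝ (fun y => f y 1) x :=
    ((contDiff_comp_proj hf 1).differentiable (by simp)) x
  have hg0 : DifferentiableAt ℝ (pd 0 (fun z => g z l)) x :=
    ((pd_contDiff (contDiff_comp_proj hg l) 0).differentiable (by simp)) x
  have hg1 : DifferentiableAt ℝ (pd 1 (fun z => g z l)) x :=
    ((pd_contDiff (contDiff_comp_proj hg l) 1).differentiable (by simp)) x
  exact (hf0.mul hg0).add (hf1.mul hg1)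

/-- The commutator identity for the current density equation in 2D MHD:
with `ω = ∇⊥·u`, `j = ∇⊥·b` and divergence-free `u, b`,
`∇⊥·(b·∇u - u·∇b) = b·∇ω - u·∇j + T(∇u,∇b)` where
`T(∇u,∇b) = 2∂₁b₁(∂₁u₂+∂₂u₁) + 2∂₂u₂(∂₁b₂+∂₂b₁)`. -/
theorem curl_commutator_identity
    (u b : (Fin 2 → ℝ) → (Fin 2 → ℝ))
    (hu : ContDiff ℝ (⊤ : ℕ∞) u) (hb : ContDiff ℝ (⊤ : ℕ∞) b)
    (hdivu : ∀ x, pd 0 (fun y => u y 0) x + pd 1 (fun y => u y 1) x = 0)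
    (hdivb : ∀ x, pd 0 (fun y => b y 0) x + pd 1 (fun y => b y 1) x = 0)
    (ω j : (Fin 2 → ℝ) → ℝ)
    (hω : ω = fun y => -(pd 1 (fun z => u z 0) y) + pd 0 (fun z => u z 1) y)
    (hj : j = fun y => -(pd 1 (fun z => b z 0) y) + pd 0 (fun z => b z 1) y)
    (G : (Fin 2 → ℝ) → (Fin 2 → ℝ))
    (hG : G = fun y i =>
      (b y 0 * pd 0 (fun z => u z i) y + b y 1 * pd 1 (fun z => u z i) y)
      - (u y 0 * pd 0 (fun z => b z i) y + u y 1 * pd 1 (fun z => b z i) y)) :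
    ∀ x, -(pd 1 (fun y => G y 0) x) + pd 0 (fun y => G y 1) x
      = (b x 0 * pd 0 ω x + b x 1 * pd 1 ω x)
        - (u x 0 * pd 0 j x + u x 1 * pd 1 j x)
        + (2 * pd 0 (fun z => b z 0) x
            * (pd 0 (fun z => u z 1) x + pd 1 (fun z => u z 0) x)
          + 2 * pd 1 (fun z => u z 1) x
            * (pd 0 (fun z => b z 1) x + pd 1 (fun z => b z 0) x)) := by
  subst hω hj hG
  intro x
  -- expand the curl of G
  have hG0 : ∀ i : Fin 2, pd i (fun y =>
      (b y 0 * pd 0 (fun z => u z (0:Fin 2)) y + b y 1 * pd 1 (fun z => u z 0) y)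
      - (u y 0 * pd 0 (fun z => b z 0) y + u y 1 * pd 1 (fun z => b z 0) y)) x
      = (pd i (fun y => b y 0) x * pd 0 (fun z => u z 0) x
        + b x 0 * pd i (pd 0 (fun z => u z 0)) x
        + pd i (fun y => b y 1) x * pd 1 (fun z => u z 0) x
        + b x 1 * pd i (pd 1 (fun z => u z 0)) x)
      - (pd i (fun y => u y 0) x * pd 0 (fun z => b z 0) x
        + u x 0 * pd i (pd 0 (fun z => b z 0)) x
        + pd i (fun y => u y 1) x * pd 1 (fun z => b z 0) x
        + u x 1 * pd i (pd 1 (fun z => b z 0)) x) := by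
    intro i
    rw [pd_sub (diffAt_half hb hu 0 x) (diffAt_half hu hb 0 x),
      pd_half hb hu 0 i x, pd_half hu hb 0 i x]
  have hG1 : ∀ i : Fin 2, pd i (fun y =>
      (b y 0 * pd 0 (fun z => u z (1:Fin 2)) y + b y 1 * pd 1 (fun z => u z 1) y)
      - (u y 0 * pd 0 (fun z => b z 1) y + u y 1 * pd 1 (fun z => b z 1) y)) x
      = (pd i (fun y => b y 0) x * pd 0 (fun z => u z 1) x
        + b x 0 * pd i (pd 0 (fun z => u z 1)) x
        + pd i (fun y => b y 1) x * pd 1 (fun z => u z 1) x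
        + b x 1 * pd i (pd 1 (fun z => u z 1)) x)
      - (pd i (fun y => u y 0) x * pd 0 (fun z => b z 1) x
        + u x 0 * pd i (pd 0 (fun z => b z 1)) x
        + pd i (fun y => u y 1) x * pd 1 (fun z => b z 1) x
        + u x 1 * pd i (pd 1 (fun z => b z 1)) x) := by
    intro i
    rw [pd_sub (diffAt_half hb hu 1 x) (diffAt_half hu hb 1 x),
      pd_half hb hu 1 i x, pd_half hu hb 1 i x]
  -- expand the derivatives of ω and j
  have hω' : ∀ (f : (Fin 2 → ℝ) → (Fin 2 → ℝ)) (hf : ContDiff ℝ (⊤ : ℕ∞) f) (i : Fin 2),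
      pd i (fun y => -(pd 1 (fun z => f z 0) y) + pd 0 (fun z => f z 1) y) x
      = -(pd i (pd 1 (fun z => f z 0)) x) + pd i (pd 0 (fun z => f z 1)) x := by
    intro f hf i
    have h0 : DifferentiableAt ℝ (fun y => -(pd 1 (fun z => f z 0) y)) x :=
      (((pd_contDiff (contDiff_comp_proj hf 0) 1).differentiable (by simp)) x).neg
    have h1 : DifferentiableAt ℝ (pd 0 (fun z => f z 1)) x :=
      ((pd_contDiff (contDiff_comp_proj hf 1) 0).differentiable (by simp)) x
    rw [pd_add h0 h1 i, pd_neg]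
  rw [hG0 1, hG1 0, hω' u hu 0, hω' u hu 1, hω' b hb 0, hω' b hb 1]
  -- normalize mixed partials
  rw [pd_comm (contDiff_comp_proj hu 0) 1 0 x, pd_comm (contDiff_comp_proj hu 1) 1 0 x,
    pd_comm (contDiff_comp_proj hb 0) 1 0 x, pd_comm (contDiff_comp_proj hb 1) 1 0 x]
  linear_combination (-(pd 1 (fun z => b z 0) x + pd 0 (fun z => b z 1) x)) * hdivu x
    + (-(pd 1 (fun z => u z 0) x + pd 0 (fun z => u z 1) x)) * hdivb x
end

section
/- Let T > 0, and let g : [0,T] → ℝ be a nonnegative continuous function and h : [0,T] → ℝ a nonnegative integrable function. Suppose a nonnegative continuous function y : [0,T] → ℝ satisfies y(t) ≤ C(1 + y₀) + C∫₀ᵗ h(τ) y(τ) log(y(τ)) dτ for all t, where C ≥ 1, y₀ ≥ 0, and y(t) ≥ e for all t. Then y(t) ≤ (C(1+y₀))^{exp(C ∫₀ᵗ h(τ)dτ)} for all t ∈ [0,T]. -/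
/-!
Let `R t = C (1 + y₀) + C ∫₀ᵗ h y log y`, which dominates `y` and hence stays `≥ e`.
It is absolutely continuous with `R' = C h y log y ≤ C h R log R` almost everywhere, so
`(log log R)' ≤ C h` almost everywhere. Integrating (the fundamental theorem of calculus for
absolutely continuous functions) gives `log log R t ≤ log log R 0 + C ∫₀ᵗ h`, that is
`R t ≤ R 0 ^ exp (C ∫₀ᵗ h)`.
-/

open MeasureTheory Set Filter Real

theorem LipschitzOnWith.comp_absolutelyContinuousOnInterval {X Y : Type*} [PseudoMetricSpace X]
    [PseudoMetricSpace Y] {f : ℝ → X} {g : X → Y} {K : NNReal} {s : Set X} {a b : ℝ}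
    (hg : LipschitzOnWith K g s) (hf : AbsolutelyContinuousOnInterval f a b)
    (hfs : MapsTo f (uIcc a b) s) : AbsolutelyContinuousOnInterval (g ∘ f) a b := by
  have hK := Tendsto.const_mul (K : ℝ) (show Tendsto _ _ _ from hf)
  rw [mul_zero] at hK
  refine squeeze_zero' (Eventually.of_forall fun E ↦ Finset.sum_nonneg fun _ _ ↦ dist_nonneg)
    ?_ hK
  filter_upwards [mem_inf_of_right (mem_principal_self _)] with E hE
  rw [Finset.mul_sum]
  exact Finset.sum_le_sum fun i hi ↦
    hg.dist_le_mul _ (hfs (hE.1 i hi).1) _ (hfs (hE.1 i hi).2)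

theorem Real.lipschitzOnWith_log_Ici_one : LipschitzOnWith 1 log (Ici 1) := by
  refine LipschitzOnWith.of_dist_le_mul fun x hx y hy ↦ ?_
  wlog hxy : x ≤ y generalizing x y
  · rw [dist_comm, dist_comm x]; exact this y hy x hx (le_of_not_ge hxy)
  have hx0 : 0 < x := lt_of_lt_of_le one_pos hx
  have hy0 : 0 < y := hx0.trans_le hxy
  rw [Real.dist_eq, Real.dist_eq, abs_sub_comm, abs_sub_comm x,
    abs_of_nonneg (sub_nonneg.2 (log_le_log hx0 hxy)), abs_of_nonneg (sub_nonneg.2 hxy),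
    NNReal.coe_one, one_mul, ← log_div hy0.ne' hx0.ne']
  calc log (y / x) ≤ y / x - 1 := log_le_sub_one_of_pos (by positivity)
    _ = (y - x) / x := by field_simp
    _ ≤ y - x := div_le_self (by linarith) hx

theorem log_log_sub_log_log_le_integral {R r k : ℝ → ℝ} {a b : ℝ} (hab : a ≤ b)
    (hR : AbsolutelyContinuousOnInterval R a b) (hRe : ∀ x ∈ Icc a b, exp 1 ≤ R x)
    (hk : IntervalIntegrable k volume a b)
    (hr : ∀ᵐ x, x ∈ Icc a b → HasDerivAt R (r x) x ∧ r x ≤ k x * (R x * log (R x))) :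
    log (log (R b)) - log (log (R a)) ≤ ∫ x in a..b, k x := by
  have hlogR : ∀ x ∈ Icc a b, 1 ≤ log (R x) := fun x hx ↦ by
    simpa using log_le_log (exp_pos 1) (hRe x hx)
  have hR1 : ∀ x ∈ Icc a b, 1 ≤ R x := fun x hx ↦ (one_le_exp zero_le_one).trans (hRe x hx)
  have hL : AbsolutelyContinuousOnInterval (fun x ↦ log (log (R x))) a b := by
    rw [← uIcc_of_le hab] at hlogR hR1
    exact lipschitzOnWith_log_Ici_one.comp_absolutelyContinuousOnInterval
      (lipschitzOnWith_log_Ici_one.comp_absolutelyContinuousOnInterval hR hR1) hlogR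
  rw [← hL.integral_deriv_eq_sub]
  refine intervalIntegral.integral_mono_ae_restrict hab hL.intervalIntegrable_deriv hk ?_
  filter_upwards [(ae_restrict_iff' measurableSet_Icc).2 hr, ae_restrict_mem measurableSet_Icc]
    with x ⟨hRr, hrk⟩ hx
  have hRlogR : 0 < R x * log (R x) :=
    mul_pos (zero_lt_one.trans_le (hR1 x hx)) (zero_lt_one.trans_le (hlogR x hx))
  rw [((hRr.log (by linarith [hR1 x hx])).log (by linarith [hlogR x hx])).deriv, div_div,
    div_le_iff₀ hRlogR]
  exact hrk

theorem le_rpow_exp_of_log_log_le {x a s : ℝ} (hx : 1 < x) (ha : 1 < a)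
    (h : log (log x) ≤ log (log a) + s) : x ≤ a ^ exp s := by
  have hlog : log x ≤ log a * exp s := by
    rw [← exp_log (log_pos hx), ← exp_log (log_pos ha), ← exp_add]
    exact exp_le_exp.2 h
  rw [rpow_def_of_pos (zero_lt_one.trans ha), ← exp_log (zero_lt_one.trans hx)]
  exact exp_le_exp.2 hlog

theorem le_rpow_exp_integral_of_le_add_integral_mul_log {y k : ℝ → ℝ} {a b c : ℝ}
    (hab : a ≤ b) (hy : ∀ s ∈ Icc a b, exp 1 ≤ y s) (hk : ∀ s ∈ Icc a b, 0 ≤ k s)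
    (hk_int : IntervalIntegrable k volume a b)
    (hky_int : IntervalIntegrable (fun s ↦ k s * (y s * log (y s))) volume a b)
    (hineq : ∀ s ∈ Icc a b, y s ≤ c + ∫ τ in a..s, k τ * (y τ * log (y τ))) :
    y b ≤ c ^ exp (∫ s in a..b, k s) := by
  set R : ℝ → ℝ := fun s ↦ c + ∫ τ in a..s, k τ * (y τ * log (y τ))
  have hR : AbsolutelyContinuousOnInterval R a b :=
    (LipschitzWith.const c).lipschitzOnWith.absolutelyContinuousOnInterval.fun_add
      (hky_int.absolutelyContinuousOnInterval_intervalIntegral left_mem_uIcc)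
  have hRe : ∀ s ∈ Icc a b, exp 1 ≤ R s := fun s hs ↦ (hy s hs).trans (hineq s hs)
  have hr : ∀ᵐ s, s ∈ Icc a b →
      HasDerivAt R (k s * (y s * log (y s))) s ∧
        k s * (y s * log (y s)) ≤ k s * (R s * log (R s)) := by
    filter_upwards [hky_int.ae_hasDerivAt_integral] with s hs hsab
    refine ⟨(hs (uIcc_of_le hab ▸ hsab) a left_mem_uIcc).const_add c, ?_⟩
    have hy1 : 1 ≤ y s := (one_le_exp zero_le_one).trans (hy s hsab)
    exact mul_le_mul_of_nonneg_left (mul_le_mul (hineq s hsab)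
      (log_le_log (by linarith) (hineq s hsab)) (log_nonneg hy1) (by linarith [hineq s hsab]))
      (hk s hsab)
  have hR1 : ∀ s ∈ Icc a b, 1 < R s := fun s hs ↦
    (one_lt_exp_iff.2 one_pos).trans_le (hRe s hs)
  have hRa : R a = c := by simp [R]
  calc y b ≤ R b := hineq b (right_mem_Icc.2 hab)
    _ ≤ R a ^ exp (∫ s in a..b, k s) :=
      le_rpow_exp_of_log_log_le (hR1 b (right_mem_Icc.2 hab)) (hR1 a (left_mem_Icc.2 hab))
        (by linarith [log_log_sub_log_log_le_integral hab hR hRe hk_int hr])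
    _ = c ^ exp (∫ s in a..b, k s) := by rw [hRa]

theorem log_gronwall_general
    (T : ℝ) (C y₀ : ℝ) (hC : 1 ≤ C)
    (y h : ℝ → ℝ)
    (hy_cont : ContinuousOn y (Set.Icc 0 T))
    (hy_ge : ∀ t ∈ Set.Icc 0 T, Real.exp 1 ≤ y t)
    (hh_nonneg : ∀ t ∈ Set.Icc 0 T, 0 ≤ h t)
    (hh_int : IntegrableOn h (Set.Icc 0 T))
    (hineq : ∀ t ∈ Set.Icc 0 T,
      y t ≤ C * (1 + y₀) + C * ∫ τ in Set.Ioc 0 t, h τ * y τ * Real.log (y τ)) :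
    ∀ t ∈ Set.Icc 0 T,
      y t ≤ (C * (1 + y₀)) ^ Real.exp (C * ∫ τ in Set.Ioc 0 t, h τ) := by
  intro t ht
  have hsub : Icc 0 t ⊆ Icc 0 T := Icc_subset_Icc_right ht.2
  have hint {f : ℝ → ℝ} (hf : IntegrableOn f (Icc 0 T)) : IntervalIntegrable f volume 0 t :=
    (hf.mono_set (uIcc_of_le ht.1 ▸ hsub)).intervalIntegrable
  have hy_log : ContinuousOn (fun s ↦ y s * log (y s)) (Icc 0 T) :=
    hy_cont.mul (hy_cont.log fun s hs ↦ ((exp_pos 1).trans_le (hy_ge s hs)).ne')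
  have hCh : IntegrableOn (fun s ↦ C * h s) (Icc 0 T) := hh_int.const_mul C
  have hmain := le_rpow_exp_integral_of_le_add_integral_mul_log (c := C * (1 + y₀)) ht.1
    (fun s hs ↦ hy_ge s (hsub hs))
    (fun s hs ↦ mul_nonneg (by linarith) (hh_nonneg s (hsub hs)))
    (hint hCh) (hint (hCh.mul_continuousOn hy_log isCompact_Icc)) fun s hs ↦ by
      simpa only [intervalIntegral.integral_of_le hs.1, integral_const_mul, mul_assoc]
        using hineq s (hsub hs)
  simpa only [intervalIntegral.integral_of_le ht.1, integral_const_mul] using hmain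

/-- Logarithmic Gronwall inequality: if `y ≥ e` is continuous, `h ≥ 0` is
integrable, `C ≥ 1`, `y₀ ≥ 0` and
`y(t) ≤ C(1+y₀) + C∫₀ᵗ h(τ) y(τ) log y(τ) dτ`, then
`y(t) ≤ (C(1+y₀))^(exp(C∫₀ᵗ h))`. -/
theorem log_gronwall
    (T : ℝ) (hT : 0 < T) (C y₀ : ℝ) (hC : 1 ≤ C) (hy₀ : 0 ≤ y₀)
    (y h : ℝ → ℝ)
    (hy_cont : ContinuousOn y (Set.Icc 0 T))
    (hy_ge : ∀ t ∈ Set.Icc 0 T, Real.exp 1 ≤ y t)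
    (hh_nonneg : ∀ t ∈ Set.Icc 0 T, 0 ≤ h t)
    (hh_int : IntegrableOn h (Set.Icc 0 T))
    (hineq : ∀ t ∈ Set.Icc 0 T,
      y t ≤ C * (1 + y₀) + C * ∫ τ in Set.Ioc 0 t, h τ * y τ * Real.log (y τ)) :
    ∀ t ∈ Set.Icc 0 T,
      y t ≤ (C * (1 + y₀)) ^ Real.exp (C * ∫ τ in Set.Ioc 0 t, h τ) :=
  log_gronwall_general T C y₀ hC y h hy_cont hy_ge hh_nonneg hh_int hineq
end
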